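/- Let Ω be the Aubry set of a max-plus IFS and S its Mañé potential. If λ₁ : Ω → [−∞,0] satisfies λ₁(x₀) = 0 at some x₀ ∈ Ω, then the function λ̄(x) := sup_{y∈Ω} (S(x,y) + λ₁(y)) satisfies λ̄ ≤ 0, λ̄(x₀) = 0, and λ̄(x) = sup_{z∈Ω} (S(x,z) + λ̄(z)) for every x ∈ X. -/

import Mathlib

open Filter Topology

/-- Apply the maps of a word: `applyWord φ [j₁,…,jₙ] x = φ_{j₁}(⋯(φ_{jₙ}(x)))`. -/
def applyWord {J X : Type*} (φ : J → X → X) : List J → X → X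
  | [], x => x
  | j :: w, x => φ j (applyWord φ w x)

/-- Birkhoff-like sum of weights along a word:
`Sum((j₁,…,jₙ),x) = q_{j₁}(φ_{j₂}∘⋯∘φ_{jₙ}(x)) + ⋯ + q_{jₙ}(x)`. -/
def sumWord {J X : Type*} (φ : J → X → X) (q : J → X → ℝ) : List J → X → ℝ
  | [], _ => 0
  | j :: w, x => q j (applyWord φ w x) + sumWord φ q w x

/-- `S_ε(x,y)`: the sup of `Sum(ω,y)` over nonempty words ω with `d(x,φ_ω(y)) < ε`. -/
noncomputable def Seps {J X : Type*} [MetricSpace X] (φ : J → X → X) (q : J → X → ℝ)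
    (ε : ℝ) (x y : X) : EReal :=
  ⨆ (ω : List J) (_ : ω ≠ [] ∧ dist x (applyWord φ ω y) < ε),
    ((sumWord φ q ω y : ℝ) : EReal)

/-- The Mañé potential `S(x,y) = lim_{ε→0} S_ε(x,y) = inf_{ε>0} S_ε(x,y)`. -/
noncomputable def manePot {J X : Type*} [MetricSpace X] (φ : J → X → X) (q : J → X → ℝ)
    (x y : X) : EReal :=
  ⨅ (ε : ℝ) (_ : 0 < ε), Seps φ q ε x y

/- ### Auxiliary lemmas -/

lemma applyWord_append {J X : Type*} (φ : J → X → X) (w₁ w₂ : List J) (x : X) :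
    applyWord φ (w₁ ++ w₂) x = applyWord φ w₁ (applyWord φ w₂ x) := by
  induction w₁ with
  | nil => rfl
  | cons j w ih => simp [applyWord, ih]

lemma sumWord_append {J X : Type*} (φ : J → X → X) (q : J → X → ℝ) (w₁ w₂ : List J) (x : X) :
    sumWord φ q (w₁ ++ w₂) x = sumWord φ q w₁ (applyWord φ w₂ x) + sumWord φ q w₂ x := by
  induction w₁ with
  | nil => simp [sumWord]
  | cons j w ih => simp [sumWord, ih, applyWord_append]; ring

lemma dist_applyWord {J X : Type*} [MetricSpace J] [MetricSpace X] {γ : ℝ} (hγ : 0 ≤ γ)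
    (φ : J → X → X)
    (hφ : ∀ j₁ j₂ x₁ x₂, dist (φ j₁ x₁) (φ j₂ x₂) ≤ γ * (dist j₁ j₂ + dist x₁ x₂))
    (w : List J) (a b : X) :
    dist (applyWord φ w a) (applyWord φ w b) ≤ γ ^ w.length * dist a b := by
  induction w with
  | nil => simp [applyWord]
  | cons j w ih =>
    have h := hφ j j (applyWord φ w a) (applyWord φ w b)
    simp only [dist_self, zero_add] at h
    calc dist (applyWord φ (j :: w) a) (applyWord φ (j :: w) b)
        ≤ γ * dist (applyWord φ w a) (applyWord φ w b) := h
      _ ≤ γ ^ (j :: w).length * dist a b := by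
          calc γ * dist (applyWord φ w a) (applyWord φ w b)
              ≤ γ * (γ ^ w.length * dist a b) := mul_le_mul_of_nonneg_left ih hγ
            _ = γ ^ (j :: w).length * dist a b := by
                simp [List.length_cons, pow_succ]; ring

lemma geomsum_le {γ : ℝ} (hγ0 : 0 < γ) (hγ1 : γ < 1) (n : ℕ) :
    (∑ k ∈ Finset.range n, γ ^ k) ≤ 1 / (1 - γ) := by
  have h1 : (0:ℝ) < 1 - γ := by linarith
  rw [le_div_iff₀ h1]
  nlinarith [geom_sum_mul γ n, pow_nonneg hγ0.le n]

lemma abs_sumWord_sub {J X : Type*} [MetricSpace J] [MetricSpace X] {γ C : ℝ}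
    (hγ0 : 0 < γ) (hγ1 : γ < 1)
    (φ : J → X → X)
    (hφ : ∀ j₁ j₂ x₁ x₂, dist (φ j₁ x₁) (φ j₂ x₂) ≤ γ * (dist j₁ j₂ + dist x₁ x₂))
    (q : J → X → ℝ) (hC : 0 < C)
    (hq : ∀ j x₁ x₂, |q j x₁ - q j x₂| ≤ C * dist x₁ x₂)
    (w : List J) (a b : X) :
    |sumWord φ q w a - sumWord φ q w b| ≤ C / (1 - γ) * dist a b := by
  have key : |sumWord φ q w a - sumWord φ q w b|
      ≤ C * (∑ k ∈ Finset.range w.length, γ ^ k) * dist a b := by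
    induction w with
    | nil => simp [sumWord]
    | cons j w ih =>
      have h1 := hq j (applyWord φ w a) (applyWord φ w b)
      have h2 := dist_applyWord hγ0.le φ hφ w a b
      have h3 : C * dist (applyWord φ w a) (applyWord φ w b) ≤ C * (γ ^ w.length * dist a b) :=
        mul_le_mul_of_nonneg_left h2 hC.le
      have h4 : |q j (applyWord φ w a) + sumWord φ q w a
          - (q j (applyWord φ w b) + sumWord φ q w b)|
          ≤ |q j (applyWord φ w a) - q j (applyWord φ w b)|
            + |sumWord φ q w a - sumWord φ q w b| := by
        have : |q j (applyWord φ w a) - q j (applyWord φ w b) + (sumWord φ q w a - sumWord φ q w b)|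
            ≤ |q j (applyWord φ w a) - q j (applyWord φ w b)| + |sumWord φ q w a - sumWord φ q w b| :=
          abs_add_le (q j (applyWord φ w a) - q j (applyWord φ w b))
          (sumWord φ q w a - sumWord φ q w b)
        convert this using 2; ring
      simp only [sumWord, List.length_cons]
      rw [Finset.sum_range_succ]
      calc |q j (applyWord φ w a) + sumWord φ q w a
          - (q j (applyWord φ w b) + sumWord φ q w b)|
          ≤ |q j (applyWord φ w a) - q j (applyWord φ w b)|
            + |sumWord φ q w a - sumWord φ q w b| := h4
        _ ≤ C * (γ ^ w.length * dist a b)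
            + C * (∑ k ∈ Finset.range w.length, γ ^ k) * dist a b :=
            add_le_add (h1.trans h3) ih
        _ = C * ((∑ k ∈ Finset.range w.length, γ ^ k) + γ ^ w.length) * dist a b := by ring
  calc |sumWord φ q w a - sumWord φ q w b|
      ≤ C * (∑ k ∈ Finset.range w.length, γ ^ k) * dist a b := key
    _ ≤ C * (1 / (1 - γ)) * dist a b := by
        apply mul_le_mul_of_nonneg_right _ dist_nonneg
        exact mul_le_mul_of_nonneg_left (geomsum_le hγ0 hγ1 _) hC.le
    _ = C / (1 - γ) * dist a b := by ring

lemma q_nonpos {J X : Type*} [MetricSpace J] [MetricSpace X] [CompactSpace J] [Nonempty J]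
    (q : J → X → ℝ) (hqc : Continuous fun p : J × X => q p.1 p.2)
    (hqn : ∀ x, (⨆ j : J, q j x) = 0) (j : J) (x : X) : q j x ≤ 0 := by
  have hcont : Continuous fun j : J => q j x :=
    hqc.comp (continuous_id.prodMk continuous_const)
  have hbdd : BddAbove (Set.range fun j : J => q j x) :=
    (isCompact_range hcont).bddAbove
  have := le_ciSup hbdd j
  rwa [hqn x] at this

lemma sumWord_nonpos {J X : Type*} [MetricSpace J] [MetricSpace X] [CompactSpace J] [Nonempty J]
    (φ : J → X → X) (q : J → X → ℝ) (hqc : Continuous fun p : J × X => q p.1 p.2)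
    (hqn : ∀ x, (⨆ j : J, q j x) = 0) (w : List J) (x : X) : sumWord φ q w x ≤ 0 := by
  induction w with
  | nil => simp [sumWord]
  | cons j w ih =>
    simp only [sumWord]
    have := q_nonpos q hqc hqn j (applyWord φ w x)
    linarith

lemma Seps_nonpos {J X : Type*} [MetricSpace J] [MetricSpace X] [CompactSpace J] [Nonempty J]
    (φ : J → X → X) (q : J → X → ℝ) (hqc : Continuous fun p : J × X => q p.1 p.2)
    (hqn : ∀ x, (⨆ j : J, q j x) = 0) (ε : ℝ) (x y : X) : Seps φ q ε x y ≤ 0 := by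
  refine iSup₂_le fun ω _ => ?_
  exact_mod_cast sumWord_nonpos φ q hqc hqn ω y

lemma manePot_nonpos {J X : Type*} [MetricSpace J] [MetricSpace X] [CompactSpace J] [Nonempty J]
    (φ : J → X → X) (q : J → X → ℝ) (hqc : Continuous fun p : J × X => q p.1 p.2)
    (hqn : ∀ x, (⨆ j : J, q j x) = 0) (x y : X) : manePot φ q x y ≤ 0 :=
  (iInf₂_le 1 one_pos).trans (Seps_nonpos φ q hqc hqn 1 x y)

lemma ereal_le_of_forall_le_add {a c : EReal} (hc : c ≤ 0) {t₀ : ℝ} (ht₀ : 0 < t₀)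
    (h : ∀ t : ℝ, 0 < t → t < t₀ → a ≤ c + (t : EReal)) : a ≤ c := by
  rw [← EReal.le_of_forall_lt_iff_le]
  intro z hz
  induction c using EReal.rec with
  | bot =>
    have := h (t₀ / 2) (by linarith) (by linarith)
    rw [EReal.bot_add] at this
    exact this.trans bot_le
  | coe r =>
    have hrz : r < z := by exact_mod_cast hz
    set t := min (t₀ / 2) (z - r) with ht
    have h1 : 0 < t := lt_min (by linarith) (by linarith)
    have h2 : t < t₀ := (min_le_left _ _).trans_lt (by linarith)
    have h3 : r + t ≤ z := by
      have := min_le_right (t₀ / 2) (z - r)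
      rw [ht]; linarith
    calc a ≤ (r : EReal) + (t : EReal) := h t h1 h2
      _ = ((r + t : ℝ) : EReal) := (EReal.coe_add _ _).symm
      _ ≤ (z : EReal) := by exact_mod_cast h3
  | top => exact absurd hc (by simp)

lemma mane_triangle {J X : Type*} [MetricSpace J] [MetricSpace X]
    [CompactSpace J] [Nonempty J]
    {γ C : ℝ} (hγ0 : 0 < γ) (hγ1 : γ < 1)
    (φ : J → X → X)
    (hφ : ∀ j₁ j₂ x₁ x₂, dist (φ j₁ x₁) (φ j₂ x₂) ≤ γ * (dist j₁ j₂ + dist x₁ x₂))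
    (q : J → X → ℝ) (hC : 0 < C)
    (hq : ∀ j x₁ x₂, |q j x₁ - q j x₂| ≤ C * dist x₁ x₂)
    (hqc : Continuous fun p : J × X => q p.1 p.2)
    (hqn : ∀ x, (⨆ j : J, q j x) = 0)
    (x z y : X) :
    manePot φ q x z + manePot φ q z y ≤ manePot φ q x y := by
  refine le_iInf₂ fun ε hε => ?_
  set L := C / (1 - γ) with hL
  have hL0 : 0 < L := div_pos hC (by linarith)
  refine ereal_le_of_forall_le_add (Seps_nonpos φ q hqc hqn ε x y)
    (mul_pos hL0 (by linarith : (0:ℝ) < ε / 2)) (fun t ht ht' => ?_)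
  set δ := t / L with hδ
  have hδ0 : 0 < δ := div_pos ht hL0
  have hδε : δ < ε / 2 := by
    rw [hδ, div_lt_iff₀ hL0]
    calc t < L * (ε / 2) := ht'
      _ = ε / 2 * L := by ring
  have hLδ : L * δ = t := by
    rw [hδ]; field_simp
  have key : Seps φ q (ε / 2) x z + Seps φ q δ z y ≤ Seps φ q ε x y + (t : EReal) := by
    refine EReal.add_le_of_forall_lt fun a' ha' b' hb' => ?_
    rw [Seps, lt_iSup_iff] at ha'
    obtain ⟨ω₁, ha'⟩ := ha'
    rw [lt_iSup_iff] at ha'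
    obtain ⟨hP₁, ha'⟩ := ha'
    rw [Seps, lt_iSup_iff] at hb'
    obtain ⟨ω₂, hb'⟩ := hb'
    rw [lt_iSup_iff] at hb'
    obtain ⟨hP₂, hb'⟩ := hb'
    have hdzy : dist z (applyWord φ ω₂ y) < δ := hP₂.2
    have hcontr : dist (applyWord φ ω₁ z) (applyWord φ ω₁ (applyWord φ ω₂ y))
        ≤ dist z (applyWord φ ω₂ y) := by
      calc dist (applyWord φ ω₁ z) (applyWord φ ω₁ (applyWord φ ω₂ y))
          ≤ γ ^ ω₁.length * dist z (applyWord φ ω₂ y) := dist_applyWord hγ0.le φ hφ _ _ _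
        _ ≤ 1 * dist z (applyWord φ ω₂ y) :=
            mul_le_mul_of_nonneg_right (pow_le_one₀ hγ0.le hγ1.le) dist_nonneg
        _ = dist z (applyWord φ ω₂ y) := one_mul _
    have hd : dist x (applyWord φ (ω₁ ++ ω₂) y) < ε := by
      rw [applyWord_append]
      calc dist x (applyWord φ ω₁ (applyWord φ ω₂ y))
          ≤ dist x (applyWord φ ω₁ z)
            + dist (applyWord φ ω₁ z) (applyWord φ ω₁ (applyWord φ ω₂ y)) := dist_triangle _ _ _
        _ < ε / 2 + δ := add_lt_add_of_lt_of_le hP₁.2 (hcontr.trans hdzy.le)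
        _ < ε := by linarith
    have hsumabs := abs_sumWord_sub hγ0 hγ1 φ hφ q hC hq ω₁ z (applyWord φ ω₂ y)
    rw [← hL] at hsumabs
    have hsum : sumWord φ q ω₁ z + sumWord φ q ω₂ y ≤ sumWord φ q (ω₁ ++ ω₂) y + t := by
      rw [sumWord_append]
      have h1 : L * dist z (applyWord φ ω₂ y) ≤ L * δ :=
        mul_le_mul_of_nonneg_left hdzy.le hL0.le
      rw [hLδ] at h1
      have := abs_le.mp hsumabs
      linarith [this.1, this.2]
    have hne : ω₁ ++ ω₂ ≠ [] := fun h => hP₁.1 (List.append_eq_nil_iff.mp h).1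
    have hle : ((sumWord φ q (ω₁ ++ ω₂) y : ℝ) : EReal) ≤ Seps φ q ε x y :=
      le_iSup₂ (f := fun (ω : List J) (_ : ω ≠ [] ∧ dist x (applyWord φ ω y) < ε) =>
        ((sumWord φ q ω y : ℝ) : EReal)) (ω₁ ++ ω₂) ⟨hne, hd⟩
    calc a' + b' ≤ ((sumWord φ q ω₁ z : ℝ) : EReal) + ((sumWord φ q ω₂ y : ℝ) : EReal) :=
          add_le_add ha'.le hb'.le
      _ = ((sumWord φ q ω₁ z + sumWord φ q ω₂ y : ℝ) : EReal) := (EReal.coe_add _ _).symm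
      _ ≤ ((sumWord φ q (ω₁ ++ ω₂) y + t : ℝ) : EReal) := by exact_mod_cast hsum
      _ = ((sumWord φ q (ω₁ ++ ω₂) y : ℝ) : EReal) + (t : EReal) := EReal.coe_add _ _
      _ ≤ Seps φ q ε x y + (t : EReal) := add_le_add_left hle _
  calc manePot φ q x z + manePot φ q z y
      ≤ Seps φ q (ε / 2) x z + Seps φ q δ z y :=
        add_le_add (iInf₂_le (ε / 2) (by linarith)) (iInf₂_le δ hδ0)
    _ ≤ Seps φ q ε x y + (t : EReal) := key

/-- Densities built from the Mañé potential and a function on the Aubry set: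
λ̄(x) = sup_{y∈Ω} (S(x,y)+λ₁(y)) is ≤ 0, equals 0 at x₀, and solves
λ̄(x) = sup_{z∈Ω} (S(x,z)+λ̄(z)). -/
theorem lamBar_properties {J X : Type*} [MetricSpace J] [MetricSpace X]
    [CompactSpace J] [CompactSpace X] [Nonempty J] [Nonempty X]
    {γ C : ℝ} (hγ0 : 0 < γ) (hγ1 : γ < 1)
    (φ : J → X → X)
    (hφ : ∀ j₁ j₂ x₁ x₂, dist (φ j₁ x₁) (φ j₂ x₂) ≤ γ * (dist j₁ j₂ + dist x₁ x₂))
    (q : J → X → ℝ) (hC : 0 < C)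
    (hq : ∀ j x₁ x₂, |q j x₁ - q j x₂| ≤ C * dist x₁ x₂)
    (hqc : Continuous fun p : J × X => q p.1 p.2)
    (hqn : ∀ x, (⨆ j : J, q j x) = 0)
    (lam₁ : X → EReal) (hlam₁ : ∀ x, lam₁ x ≤ 0)
    (x₀ : X) (hx₀ : manePot φ q x₀ x₀ = 0) (hlam₁x₀ : lam₁ x₀ = 0) :
    (∀ x, (⨆ (y : X) (_ : manePot φ q y y = 0), (manePot φ q x y + lam₁ y)) ≤ 0) ∧
    (⨆ (y : X) (_ : manePot φ q y y = 0), (manePot φ q x₀ y + lam₁ y)) = 0 ∧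
    (∀ x, (⨆ (y : X) (_ : manePot φ q y y = 0), (manePot φ q x y + lam₁ y)) =
      ⨆ (z : X) (_ : manePot φ q z z = 0),
        (manePot φ q x z +
          ⨆ (y : X) (_ : manePot φ q y y = 0), (manePot φ q z y + lam₁ y))) := by
  set S := manePot φ q with hS
  set lamBar : X → EReal :=
    fun x => ⨆ (y : X) (_ : S y y = 0), (S x y + lam₁ y) with hlamBar
  have hSnp : ∀ x y, S x y ≤ 0 := fun x y => manePot_nonpos φ q hqc hqn x y
  have h1 : ∀ x, lamBar x ≤ 0 := by
    intro x
    refine iSup₂_le fun y _ => ?_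
    exact add_nonpos (hSnp x y) (hlam₁ y)
  have h2 : lamBar x₀ = 0 := by
    refine le_antisymm (h1 x₀) ?_
    have : S x₀ x₀ + lam₁ x₀ = 0 := by rw [hx₀, hlam₁x₀, add_zero]
    calc (0 : EReal) = S x₀ x₀ + lam₁ x₀ := this.symm
      _ ≤ lamBar x₀ := le_iSup₂ (f := fun (y : X) (_ : S y y = 0) => S x₀ y + lam₁ y) x₀ hx₀
  refine ⟨h1, h2, fun x => ?_⟩
  refine le_antisymm ?_ ?_
  · refine iSup₂_le fun y hy => ?_
    have hle : lam₁ y ≤ lamBar y := by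
      have : S y y + lam₁ y ≤ lamBar y :=
        le_iSup₂ (f := fun (z : X) (_ : S z z = 0) => S y z + lam₁ z) y hy
      rwa [hy, zero_add] at this
    calc S x y + lam₁ y ≤ S x y + lamBar y := add_le_add_right hle _
      _ ≤ ⨆ (z : X) (_ : S z z = 0), (S x z + lamBar z) :=
        le_iSup₂ (f := fun (z : X) (_ : S z z = 0) => S x z + lamBar z) y hy
  · refine iSup₂_le fun z hz => ?_
    refine EReal.add_le_of_forall_lt fun a' ha' b' hb' => ?_
    rw [lt_iSup_iff] at hb'
    obtain ⟨y, hb'⟩ := hb'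
    rw [lt_iSup_iff] at hb'
    obtain ⟨hy, hb'⟩ := hb'
    have htri : S x z + S z y ≤ S x y :=
      mane_triangle hγ0 hγ1 φ hφ q hC hq hqc hqn x z y
    calc a' + b' ≤ S x z + (S z y + lam₁ y) := add_le_add ha'.le hb'.le
      _ = (S x z + S z y) + lam₁ y := (add_assoc _ _ _).symm
      _ ≤ S x y + lam₁ y := add_le_add_left htri _
      _ ≤ lamBar x := le_iSup₂ (f := fun (y : X) (_ : S y y = 0) => S x y + lam₁ y) y hy
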